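/- arXiv:2010.10886 — 2 statements merged into one kernel-verified Lean document; each statement's English description precedes it below -/
import Mathlib

section
/- (Proposition 1, per-task exponential inequality.) For every λ ∈ ℝ, E over the joint distribution of (W, Z̃, S, R) of exp( λ·ΔL̂(W, Z̃, R, S) − λ²(b−a)²/(2M) − ı(W; S | Z̃, R) ) ≤ 1, where ı(W;S|Z̃,R) = log( dP_{WS|Z̃R} / d(P_{W|Z̃R} ⊗ P_S) ) is the conditional information density. -/
/-!
Under the decoupled law `nuP` the selection vector `S` is uniform and independent of
`(W, Z̃, R)`, so conditionally on these `λ·ΔL̂` is a sum of `M` independent symmetric signs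
`±λ/M · (ℓ(w, z_j^1) - ℓ(w, z_j^0))`, each bounded by `|λ|(b - a)/M`. The bound
`cosh x ≤ exp (x²/2)` then gives `E_nuP[exp(λ·ΔL̂)] ≤ exp(λ²(b-a)²/(2M))`. Since `exp ı` is the
density of `muJ` with respect to `nuP`, the factor `exp(-ı)` turns the expectation under `muJ`
into this expectation under `nuP`.
-/

open MeasureTheory ProbabilityTheory Real

theorem Measurable.apply_of_countable {α β γ : Type*} [MeasurableSpace α] [MeasurableSpace β]
    [MeasurableSpace γ] [Countable β] [MeasurableSingletonClass β]
    {f : α → β → γ} {g : α → β} (hf : Measurable f) (hg : Measurable g) :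
    Measurable fun x => f x (g x) :=
  (measurable_from_prod_countable_left (f := fun p : (β → γ) × β => p.1 p.2)
    fun y => measurable_pi_apply y).comp (hf.prodMk hg)

section Rademacher

variable {ι : Type*} [Fintype ι] [DecidableEq ι]

theorem sum_exp_mul_sum_le_of_antisymm (f : ι → Bool → ℝ) (c : ι → ℝ)
    (hf : ∀ j, f j true = -f j false) (hc : ∀ j, |f j false| ≤ c j) (t : ℝ) :
    ∑ s : ι → Bool, exp (t * ∑ j, f j (s j))
      ≤ 2 ^ Fintype.card ι * exp (t ^ 2 * ∑ j, c j ^ 2 / 2) := by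
  have hcosh : ∀ j, ∑ b : Bool, exp (t * f j b) = 2 * cosh (t * f j false) := by
    intro j
    rw [Fintype.sum_bool, hf, cosh_eq, mul_neg]
    ring
  have hbound : ∀ j, cosh (t * f j false) ≤ exp (t ^ 2 * (c j ^ 2 / 2)) := by
    intro j
    refine (cosh_le_exp_half_sq _).trans (exp_le_exp.mpr ?_)
    have : f j false ^ 2 ≤ c j ^ 2 := sq_le_sq' (abs_le.mp (hc j)).1 (abs_le.mp (hc j)).2
    nlinarith [sq_nonneg t]
  calc ∑ s : ι → Bool, exp (t * ∑ j, f j (s j))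
      = ∏ j, ∑ b : Bool, exp (t * f j b) := by
        simp only [Finset.mul_sum, exp_sum, Fintype.prod_sum]
    _ = ∏ j, 2 * cosh (t * f j false) := by simp only [hcosh]
    _ ≤ ∏ j, 2 * exp (t ^ 2 * (c j ^ 2 / 2)) := by
        gcongr with j
        exact hbound j
    _ = 2 ^ Fintype.card ι * exp (t ^ 2 * ∑ j, c j ^ 2 / 2) := by
        rw [Finset.prod_mul_distrib, ← exp_sum, Finset.mul_sum, Finset.prod_const,
          Finset.card_univ]

theorem lintegral_uniform_exp_mul_sum_sub_le_one (f : ι → Bool → ℝ) (c : ι → ℝ)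
    (hf : ∀ j, f j true = -f j false) (hc : ∀ j, |f j false| ≤ c j) (t : ℝ) :
    ∫⁻ s, ENNReal.ofReal (exp (t * ∑ j, f j (s j) - t ^ 2 * ∑ j, c j ^ 2 / 2))
      ∂(PMF.uniformOfFintype (ι → Bool)).toMeasure ≤ 1 := by
  rw [← ofReal_integral_eq_lintegral_ofReal (.of_finite) (.of_forall fun _ => (exp_pos _).le),
    ← ENNReal.ofReal_one]
  refine ENNReal.ofReal_le_ofReal ?_
  have hcard : ((Fintype.card (ι → Bool) : ENNReal)⁻¹).toReal = (2 ^ Fintype.card ι)⁻¹ := by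
    simp
  simp only [PMF.integral_eq_sum, PMF.uniformOfFintype_apply, hcard, smul_eq_mul, exp_sub,
    ← Finset.mul_sum]
  rw [← Finset.sum_div, inv_mul_le_iff₀ (by positivity), div_le_iff₀ (exp_pos _), mul_one]
  exact sum_exp_mul_sum_le_of_antisymm f c hf hc t

end Rademacher

section LossGap

variable {𝒲 𝒵 : Type*} {M : ℕ}

/-- The paper's `ΔL̂` for a single task with supersample `z`. -/
noncomputable def lossGap (ℓ : 𝒲 → 𝒵 → ℝ) (w : 𝒲) (s : Fin M → Bool)
    (z : Fin M → Bool → 𝒵) : ℝ :=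
  (M : ℝ)⁻¹ * ∑ j, ℓ w (z j (!(s j))) - (M : ℝ)⁻¹ * ∑ j, ℓ w (z j (s j))

theorem measurable_lossGap [MeasurableSpace 𝒲] [MeasurableSpace 𝒵] {ℓ : 𝒲 → 𝒵 → ℝ}
    (hℓ : Measurable (Function.uncurry ℓ)) :
    Measurable fun p : 𝒲 × (Fin M → Bool) × (Fin M → Bool → 𝒵) =>
      lossGap ℓ p.1 p.2.1 p.2.2 := by
  have hloss : ∀ j (g : 𝒲 × (Fin M → Bool) × (Fin M → Bool → 𝒵) → Bool), Measurable g →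
      Measurable fun p : 𝒲 × (Fin M → Bool) × (Fin M → Bool → 𝒵) => ℓ p.1 (p.2.2 j (g p)) :=
    fun j g hg => hℓ.comp (measurable_fst.prodMk
      (((measurable_pi_apply j).comp (measurable_snd.comp measurable_snd)).apply_of_countable hg))
  unfold lossGap
  refine .sub (.const_mul (Finset.measurable_sum _ fun j _ => hloss j _ ?_) _)
    (.const_mul (Finset.measurable_sum _ fun j _ => hloss j _ (by fun_prop)) _)
  exact (measurable_of_countable not).comp (by fun_prop)

theorem lintegral_uniform_exp_lossGap_le_one {a b : ℝ} (ℓ : 𝒲 → 𝒵 → ℝ) (w : 𝒲)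
    (hℓ : ∀ z, a ≤ ℓ w z ∧ ℓ w z ≤ b) (z : Fin M → Bool → 𝒵) (lam : ℝ) :
    ∫⁻ s, ENNReal.ofReal (exp (lam * lossGap ℓ w s z - lam ^ 2 * (b - a) ^ 2 / (2 * M)))
      ∂(PMF.uniformOfFintype (Fin M → Bool)).toMeasure ≤ 1 := by
  set f : Fin M → Bool → ℝ := fun j t => ℓ w (z j (!t)) - ℓ w (z j t)
  have hf : ∀ j, f j true = -f j false := fun j => by simp [f]
  have hc : ∀ j, |f j false| ≤ b - a := fun j => by
    have := hℓ (z j true); have := hℓ (z j false)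
    simp only [f, Bool.not_false, abs_le]
    constructor <;> linarith
  have hexponent : ∀ s : Fin M → Bool,
      lam * lossGap ℓ w s z - lam ^ 2 * (b - a) ^ 2 / (2 * M)
        = lam / M * ∑ j, f j (s j) - (lam / M) ^ 2 * ∑ _j : Fin M, (b - a) ^ 2 / 2 := by
    intro s
    simp only [lossGap, f, Finset.sum_sub_distrib, Finset.sum_const, Finset.card_univ,
      Fintype.card_fin, nsmul_eq_mul]
    rcases eq_or_ne (M : ℝ) 0 with hM | hM
    · simp [hM]
    · field_simp
  simp only [hexponent]
  exact lintegral_uniform_exp_mul_sum_sub_le_one f (fun _ => b - a) hf hc (lam / M)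

end LossGap

theorem lintegral_exp_sub_eq_of_rnDeriv_eq_exp {X : Type*} [MeasurableSpace X] {μ ν : Measure X}
    [μ.HaveLebesgueDecomposition ν] (hac : μ ≪ ν) {i g : X → ℝ} (hi : Measurable i)
    (hg : Measurable g) (hd : μ.rnDeriv ν =ᵐ[ν] fun x => ENNReal.ofReal (exp (i x))) :
    ∫⁻ x, ENNReal.ofReal (exp (g x - i x)) ∂μ = ∫⁻ x, ENNReal.ofReal (exp (g x)) ∂ν := by
  rw [← lintegral_rnDeriv_mul hac (f := fun x => ENNReal.ofReal (exp (g x - i x))) (by fun_prop)]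
  refine lintegral_congr_ae ?_
  filter_upwards [hd] with x hx
  rw [hx, ← ENNReal.ofReal_mul (exp_pos _).le, ← exp_add, add_sub_cancel]

/-- `Zt ω r j s` is the supersample point of the task selected by `r`, sample index `j`,
selection bit `s`.  `muJ` is the joint law of `(W, S, Z̃, R)` and `nuP` is the decoupled law in
which `S` is replaced by an independent uniform Bernoulli vector; `idens` is the conditional
information density `ı(W;S|Z̃,R) = log(dP_{WS|Z̃R}/d(P_{W|Z̃R} ⊗ P_S))`. -/
theorem stmt_8_general {Ω 𝒲 𝒵 : Type*} [MeasurableSpace Ω] [MeasurableSpace 𝒲] [MeasurableSpace 𝒵]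
    (P : Measure Ω) [IsProbabilityMeasure P]
    (M : ℕ) (a b : ℝ)
    (ℓ : 𝒲 → 𝒵 → ℝ) (hℓmeas : Measurable (Function.uncurry ℓ))
    (hℓbdd : ∀ w z, a ≤ ℓ w z ∧ ℓ w z ≤ b)
    (W : Ω → 𝒲) (Zt : Ω → Bool → Fin M → Bool → 𝒵)
    (S : Ω → Fin M → Bool) (R : Ω → Bool)
    (hW : Measurable W) (hZt : Measurable Zt) (hS : Measurable S) (hR : Measurable R)
    (muJ nuP : Measure (𝒲 × (Fin M → Bool) × (Bool → Fin M → Bool → 𝒵) × Bool))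
    (hmuJ : muJ = P.map (fun ω => (W ω, S ω, Zt ω, R ω)))
    (hnuP : nuP = (P.prod ((PMF.uniformOfFintype (Fin M → Bool)).toMeasure)).map
      (fun p => (W p.1, p.2, Zt p.1, R p.1)))
    (hac : muJ ≪ nuP)
    (idens : 𝒲 × (Fin M → Bool) × (Bool → Fin M → Bool → 𝒵) × Bool → ℝ)
    (hidens : Measurable idens)
    (hd : muJ.rnDeriv nuP =ᵐ[nuP] fun x => ENNReal.ofReal (Real.exp (idens x)))
    (ΔL : 𝒲 × (Fin M → Bool) × (Bool → Fin M → Bool → 𝒵) × Bool → ℝ)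
    (hΔL : ∀ w s zt r, ΔL (w, s, zt, r) =
      (M : ℝ)⁻¹ * ∑ j, ℓ w (zt r j (!(s j))) - (M : ℝ)⁻¹ * ∑ j, ℓ w (zt r j (s j))) :
    ∀ lam : ℝ,
      ∫ x, Real.exp (lam * ΔL x - lam ^ 2 * (b - a) ^ 2 / (2 * M) - idens x) ∂muJ ≤ 1 := by
  intro lam
  have hφ : Measurable fun p : Ω × (Fin M → Bool) => (W p.1, p.2, Zt p.1, R p.1) := by fun_prop
  have : IsProbabilityMeasure muJ := hmuJ ▸ Measure.isProbabilityMeasure_map (by fun_prop)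
  have : IsProbabilityMeasure nuP := hnuP ▸ Measure.isProbabilityMeasure_map hφ.aemeasurable
  have hΔL' : ΔL = fun x => lossGap ℓ x.1 x.2.1 (x.2.2.1 x.2.2.2) := funext fun _ => hΔL _ _ _ _
  have hΔLmeas : Measurable ΔL := hΔL' ▸ (measurable_lossGap hℓmeas).comp
    (measurable_fst.prodMk (measurable_snd.fst.prodMk
      (measurable_snd.snd.fst.apply_of_countable measurable_snd.snd.snd)))
  have hg : Measurable fun x => lam * ΔL x - lam ^ 2 * (b - a) ^ 2 / (2 * M) := by fun_prop
  have hdecoupled : ∫⁻ x, ENNReal.ofReal (exp (lam * ΔL x - lam ^ 2 * (b - a) ^ 2 / (2 * M)))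
      ∂nuP ≤ 1 := by
    rw [hnuP, lintegral_map (by fun_prop) hφ, lintegral_prod _ (by fun_prop)]
    refine (lintegral_mono (g := 1) fun ω => ?_).trans_eq (by simp)
    simp only [hΔL']
    exact lintegral_uniform_exp_lossGap_le_one ℓ (W ω) (hℓbdd (W ω)) (Zt ω (R ω)) lam
  rw [integral_eq_lintegral_of_nonneg_ae (.of_forall fun _ => (exp_pos _).le) (by fun_prop)]
  refine ENNReal.toReal_le_of_le_ofReal zero_le_one ?_
  rw [lintegral_exp_sub_eq_of_rnDeriv_eq_exp hac hidens hg hd, ENNReal.ofReal_one]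
  exact hdecoupled

/-- Proposition 1 (per-task exponential inequality).  `Zt ω r j s` is the supersample point of
the task selected by `r`, sample index `j`, selection bit `s`.  `muJ` is the joint law of
`(W, S, Z̃, R)` and `nuP` is the decoupled law in which `S` is replaced by an independent
uniform Bernoulli vector; `idens` is the conditional information density
`ı(W;S|Z̃,R) = log(dP_{WS|Z̃R}/d(P_{W|Z̃R} ⊗ P_S))`.  For every `λ`,
`E[exp(λ·ΔL̂ − λ²(b−a)²/(2M) − ı)] ≤ 1`. -/
theorem stmt_8 {Ω 𝒲 𝒵 : Type*} [MeasurableSpace Ω] [MeasurableSpace 𝒲] [MeasurableSpace 𝒵]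
    (P : Measure Ω) [IsProbabilityMeasure P]
    (M : ℕ) (hM : 0 < M) (a b : ℝ) (hab : a ≤ b)
    (ℓ : 𝒲 → 𝒵 → ℝ) (hℓmeas : Measurable (Function.uncurry ℓ))
    (hℓbdd : ∀ w z, a ≤ ℓ w z ∧ ℓ w z ≤ b)
    (W : Ω → 𝒲) (Zt : Ω → Bool → Fin M → Bool → 𝒵)
    (S : Ω → Fin M → Bool) (R : Ω → Bool)
    (hW : Measurable W) (hZt : Measurable Zt) (hS : Measurable S) (hR : Measurable R)
    (muJ nuP : Measure (𝒲 × (Fin M → Bool) × (Bool → Fin M → Bool → 𝒵) × Bool))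
    (hmuJ : muJ = P.map (fun ω => (W ω, S ω, Zt ω, R ω)))
    (hnuP : nuP = (P.prod ((PMF.uniformOfFintype (Fin M → Bool)).toMeasure)).map
      (fun p => (W p.1, p.2, Zt p.1, R p.1)))
    (hac : muJ ≪ nuP)
    (idens : 𝒲 × (Fin M → Bool) × (Bool → Fin M → Bool → 𝒵) × Bool → ℝ)
    (hidens : Measurable idens)
    (hd : muJ.rnDeriv nuP =ᵐ[nuP] fun x => ENNReal.ofReal (Real.exp (idens x)))
    (ΔL : 𝒲 × (Fin M → Bool) × (Bool → Fin M → Bool → 𝒵) × Bool → ℝ)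
    (hΔL : ∀ w s zt r, ΔL (w, s, zt, r) =
      (M : ℝ)⁻¹ * ∑ j, ℓ w (zt r j (!(s j))) - (M : ℝ)⁻¹ * ∑ j, ℓ w (zt r j (s j))) :
    ∀ lam : ℝ,
      ∫ x, Real.exp (lam * ΔL x - lam ^ 2 * (b - a) ^ 2 / (2 * M) - idens x) ∂muJ ≤ 1 :=
  stmt_8_general P M a b ℓ hℓmeas hℓbdd W Zt S R hW hZt hS hR muJ nuP hmuJ hnuP hac idens hidens hd
    ΔL hΔL
end

section
/- (Proposition 2, environment-level exponential inequality.) For every λ ∈ ℝ, E over the joint distribution of (U, Z̃, R, S₁:ₙ) of exp( λ·ΔL̃(U, Z̃, R, S₁:ₙ) − λ²(b−a)²/(2N) − ı(U; R, S₁:ₙ | Z̃) ) ≤ 1, where ΔL̃ is the difference between the averaged per-task training loss of U evaluated on the complementary selection (R̄, S̄₁:ₙ) and on the selection (R, S₁:ₙ), and ı(U; R, S₁:ₙ | Z̃) = log( dP_{U R S₁:ₙ | Z̃} / d(P_{U|Z̃} ⊗ P_{R S₁:ₙ}) ). -/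
/-!
By the change of measure `dμ/dν = exp ı`, the expectation under the joint law is at most the
expectation of `exp (λ ΔL̃ − λ²(b−a)²/(2N))` under the decoupled law, where the selection
`(R, S₁:ₙ)` is uniform and independent of `(U, Z̃)`. For fixed `(U, Z̃)`, `ΔL̃` is the average of
`N` independent terms `gᵢ (σ xᵢ) − gᵢ xᵢ`, with `σ` flipping all selection bits of a task. Pairing
`xᵢ` with `σ xᵢ` turns each factor of the expectation into an average of `cosh`, and
`cosh y ≤ exp (y² / 2)` gives Hoeffding's bound `exp (λ²(b−a)²/(2N))`.
-/

open MeasureTheory Real Finset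

lemma sum_exp_mul_sub_comp_le_of_involutive {α : Type*} [Fintype α] {σ : α → α}
    (hσ : Function.Involutive σ) {g : α → ℝ} {a b : ℝ} (hg : ∀ x, g x ∈ Set.Icc a b) (t : ℝ) :
    ∑ x, exp (t * (g (σ x) - g x)) ≤ Fintype.card α * exp (t ^ 2 * (b - a) ^ 2 / 2) := by
  set d := fun x => t * (g (σ x) - g x) with hd
  have hd_comp : ∀ x, d (σ x) = -d x := fun x => by simp only [hd, hσ x]; ring
  have hswap : ∑ x, exp (d x) = ∑ x, exp (-d x) := by
    simp only [← hd_comp]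
    exact (Equiv.sum_comp (hσ.toPerm σ) fun x => exp (d x)).symm
  have hcosh : ∀ x, cosh (d x) ≤ exp (t ^ 2 * (b - a) ^ 2 / 2) := by
    intro x
    obtain ⟨h₁, h₂⟩ := hg x
    obtain ⟨h₃, h₄⟩ := hg (σ x)
    have hgap : (g (σ x) - g x) ^ 2 ≤ (b - a) ^ 2 := by nlinarith
    refine (cosh_le_exp_half_sq _).trans (exp_le_exp.2 ?_)
    rw [hd, mul_pow]
    gcongr
  calc ∑ x, exp (d x) = ∑ x, cosh (d x) := by
        simp only [cosh_eq, ← sum_div, sum_add_distrib, ← hswap]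
        ring
    _ ≤ ∑ _x : α, exp (t ^ 2 * (b - a) ^ 2 / 2) := sum_le_sum fun x _ => hcosh x
    _ = Fintype.card α * exp (t ^ 2 * (b - a) ^ 2 / 2) := by simp

lemma sum_exp_mul_avg_sub_comp_le_of_involutive {ι α : Type*} [Fintype ι] [DecidableEq ι]
    [Fintype α] {σ : α → α} (hσ : Function.Involutive σ) {g : ι → α → ℝ} {a b : ℝ}
    (hg : ∀ i x, g i x ∈ Set.Icc a b) (lam : ℝ) :
    ∑ x : ι → α, exp (lam * ((Fintype.card ι : ℝ)⁻¹ * ∑ i, (g i (σ (x i)) - g i (x i)))) ≤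
      Fintype.card (ι → α) * exp (lam ^ 2 * (b - a) ^ 2 / (2 * Fintype.card ι)) := by
  set n : ℝ := (Fintype.card ι : ℝ)
  set t := lam / n
  have hsplit : ∀ x : ι → α, exp (lam * (n⁻¹ * ∑ i, (g i (σ (x i)) - g i (x i)))) =
      ∏ i, exp (t * (g i (σ (x i)) - g i (x i))) := by
    intro x
    simp only [t, ← exp_sum, ← mul_sum, ← mul_assoc, div_eq_mul_inv]
  have hexponent : n * (t ^ 2 * (b - a) ^ 2 / 2) = lam ^ 2 * (b - a) ^ 2 / (2 * n) := by
    rcases eq_or_ne n 0 with hn | hn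
    · simp [t, hn]
    · simp only [t]
      field_simp
  calc ∑ x : ι → α, exp (lam * (n⁻¹ * ∑ i, (g i (σ (x i)) - g i (x i))))
      = ∏ i, ∑ y, exp (t * (g i (σ y) - g i y)) := by
        simp only [hsplit, Fintype.prod_sum]
    _ ≤ ∏ _i : ι, (Fintype.card α * exp (t ^ 2 * (b - a) ^ 2 / 2)) :=
        prod_le_prod (fun i _ => sum_nonneg fun _ _ => (exp_pos _).le)
          fun i _ => sum_exp_mul_sub_comp_le_of_involutive hσ (hg i) t
    _ = Fintype.card (ι → α) * exp (lam ^ 2 * (b - a) ^ 2 / (2 * n)) := by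
        rw [prod_const, mul_pow, ← exp_nat_mul, card_univ, hexponent, Fintype.card_fun]
        push_cast
        rfl

lemma sum_exp_mul_selection_gap_le {𝒵 : Type*} {N M : ℕ} {L : (Fin M → 𝒵) → ℝ} {a b : ℝ}
    (hL : ∀ d, L d ∈ Set.Icc a b) (zt : Fin N → Bool → Fin M → Bool → 𝒵) (lam : ℝ) :
    ∑ rs : (Fin N → Bool) × (Fin N → Fin M → Bool),
      exp (lam * ((N : ℝ)⁻¹ * ∑ i, L (fun j => zt i (!(rs.1 i)) j (!(rs.2 i j))) -
        (N : ℝ)⁻¹ * ∑ i, L (fun j => zt i (rs.1 i) j (rs.2 i j)))) ≤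
      Fintype.card ((Fin N → Bool) × (Fin N → Fin M → Bool)) *
        exp (lam ^ 2 * (b - a) ^ 2 / (2 * N)) := by
  let flip : Bool × (Fin M → Bool) → Bool × (Fin M → Bool) := fun p => (!p.1, fun j => !p.2 j)
  have hflip : Function.Involutive flip := fun p => by simp [flip]
  have h := sum_exp_mul_avg_sub_comp_le_of_involutive hflip
    (g := fun i p => L fun j => zt i p.1 j (p.2 j)) (fun i p => hL _) lam
  rw [Fintype.card_fin] at h
  rw [← Equiv.sum_comp (Equiv.arrowProdEquivProdArrow _ _ _),
    ← Fintype.card_congr (Equiv.arrowProdEquivProdArrow _ _ _)]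
  refine le_of_eq_of_le (sum_congr rfl fun x _ => ?_) h
  simp only [sum_sub_distrib, mul_sub]
  rfl

lemma lintegral_uniformOfFintype_ofReal_exp_sub_le {β : Type*} [Fintype β] [Nonempty β]
    [MeasurableSpace β] [MeasurableSingletonClass β] {f : β → ℝ} {c : ℝ}
    (h : ∑ x, exp (f x) ≤ Fintype.card β * exp c) :
    ∫⁻ x, ENNReal.ofReal (exp (f x - c)) ∂(PMF.uniformOfFintype β).toMeasure ≤ 1 := by
  have hsum : ∑ x, exp (f x - c) ≤ Fintype.card β := by
    simp only [sub_eq_add_neg, exp_add, ← sum_mul]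
    calc _ ≤ Fintype.card β * exp c * exp (-c) := by gcongr
      _ = Fintype.card β := by rw [mul_assoc, ← exp_add, add_neg_cancel, exp_zero, mul_one]
  rw [lintegral_fintype]
  simp only [PMF.toMeasure_apply_singleton _ _ (measurableSet_singleton _),
    PMF.uniformOfFintype_apply, ← sum_mul,
    ← ENNReal.ofReal_sum_of_nonneg fun x _ => (exp_pos (f x - c)).le]
  calc _ ≤ (Fintype.card β : ENNReal) * (Fintype.card β : ENNReal)⁻¹ := by
        gcongr
        exact (ENNReal.ofReal_le_ofReal hsum).trans_eq (ENNReal.ofReal_natCast _)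
    _ = 1 := ENNReal.mul_inv_cancel (by simp) (ENNReal.natCast_ne_top _)

lemma lintegral_le_lintegral_ofReal_exp_mul {α : Type*} [MeasurableSpace α] {μ ν : Measure α}
    [SigmaFinite μ] [SigmaFinite ν] (hac : μ ≪ ν) {i : α → ℝ}
    (hd : μ.rnDeriv ν =ᵐ[ν] fun x => ENNReal.ofReal (exp (i x))) (f : α → ENNReal) :
    ∫⁻ x, f x ∂μ ≤ ∫⁻ x, ENNReal.ofReal (exp (i x)) * f x ∂ν := by
  calc ∫⁻ x, f x ∂μ = ∫⁻ x, f x ∂ν.withDensity (μ.rnDeriv ν) := by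
        rw [Measure.withDensity_rnDeriv_eq _ _ hac]
    _ ≤ ∫⁻ x, μ.rnDeriv ν x * f x ∂ν :=
        lintegral_withDensity_le_lintegral_mul _ (Measure.measurable_rnDeriv _ _) _
    _ = ∫⁻ x, ENNReal.ofReal (exp (i x)) * f x ∂ν :=
        lintegral_congr_ae (hd.mono fun x hx => congrArg (· * f x) hx)

/-- `Zt ω i r j s` is the supersample point of the `i`-th task pair (task selected by bit `r`),
sample `j`, selection bit `s`; `Lhat u d` is the average per-task training loss of `u` on the
dataset `d`. `muJ` is the joint law of `(U, (R,S₁:ₙ), Z̃)`, `nuP` the decoupled law in which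
`(R,S₁:ₙ)` is an independent uniform tuple, and `idens` is the information density
`ı(U;R,S₁:ₙ|Z̃)`. -/
theorem stmt_12_general {Ω 𝒰 𝒵 : Type*} [MeasurableSpace Ω] [MeasurableSpace 𝒰] [MeasurableSpace 𝒵]
    (P : Measure Ω) [IsProbabilityMeasure P]
    (N M : ℕ) (a b : ℝ)
    (Lhat : 𝒰 → (Fin M → 𝒵) → ℝ)
    (hLhatbdd : ∀ u d, a ≤ Lhat u d ∧ Lhat u d ≤ b)
    (U : Ω → 𝒰) (Zt : Ω → Fin N → Bool → Fin M → Bool → 𝒵)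
    (R : Ω → Fin N → Bool) (S : Ω → Fin N → Fin M → Bool)
    (muJ nuP : Measure (𝒰 × ((Fin N → Bool) × (Fin N → Fin M → Bool)) ×
      (Fin N → Bool → Fin M → Bool → 𝒵)))
    (hmuJ : muJ = P.map (fun ω => (U ω, (R ω, S ω), Zt ω)))
    (hnuP : nuP = (P.prod
        ((PMF.uniformOfFintype ((Fin N → Bool) × (Fin N → Fin M → Bool))).toMeasure)).map
      (fun p => (U p.1, p.2, Zt p.1)))
    (hac : muJ ≪ nuP)
    (idens : 𝒰 × ((Fin N → Bool) × (Fin N → Fin M → Bool)) ×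
      (Fin N → Bool → Fin M → Bool → 𝒵) → ℝ)
    (hd : muJ.rnDeriv nuP =ᵐ[nuP] fun x => ENNReal.ofReal (Real.exp (idens x)))
    (ΔL : 𝒰 × ((Fin N → Bool) × (Fin N → Fin M → Bool)) ×
      (Fin N → Bool → Fin M → Bool → 𝒵) → ℝ)
    (hΔL : ∀ u r s zt, ΔL (u, (r, s), zt) =
      (N : ℝ)⁻¹ * ∑ i, Lhat u (fun j => zt i (!(r i)) j (!(s i j))) -
        (N : ℝ)⁻¹ * ∑ i, Lhat u (fun j => zt i (r i) j (s i j))) :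
    ∀ lam : ℝ,
      ∫ x, Real.exp (lam * ΔL x - lam ^ 2 * (b - a) ^ 2 / (2 * N) - idens x) ∂muJ ≤ 1 := by
  intro lam
  set c := lam ^ 2 * (b - a) ^ 2 / (2 * N)
  have : IsFiniteMeasure muJ := hmuJ ▸ inferInstance
  have : IsFiniteMeasure nuP := hnuP ▸ inferInstance
  have hdecoupled : ∀ u zt, ∫⁻ rs, ENNReal.ofReal (exp (lam * ΔL (u, rs, zt) - c))
      ∂(PMF.uniformOfFintype ((Fin N → Bool) × (Fin N → Fin M → Bool))).toMeasure ≤ 1 :=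
    fun u zt => lintegral_uniformOfFintype_ofReal_exp_sub_le <| by
      simpa only [hΔL] using sum_exp_mul_selection_gap_le (hLhatbdd u) zt lam
  have hlintegral : ∫⁻ x, ENNReal.ofReal (exp (lam * ΔL x - c - idens x)) ∂muJ ≤ 1 := calc
    _ ≤ ∫⁻ x, ENNReal.ofReal (exp (idens x)) *
          ENNReal.ofReal (exp (lam * ΔL x - c - idens x)) ∂nuP :=
        lintegral_le_lintegral_ofReal_exp_mul hac hd _
    _ = ∫⁻ x, ENNReal.ofReal (exp (lam * ΔL x - c)) ∂nuP := by
        simp only [← ENNReal.ofReal_mul (exp_pos _).le, ← exp_add, add_sub_cancel]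
    _ ≤ ∫⁻ p, ENNReal.ofReal (exp (lam * ΔL (U p.1, p.2, Zt p.1) - c))
        ∂P.prod (PMF.uniformOfFintype _).toMeasure := hnuP ▸ lintegral_map_le _ _
    _ ≤ ∫⁻ ω, ∫⁻ rs, ENNReal.ofReal (exp (lam * ΔL (U ω, rs, Zt ω) - c))
        ∂(PMF.uniformOfFintype _).toMeasure ∂P := lintegral_prod_le _
    _ ≤ ∫⁻ _ω, 1 ∂P := lintegral_mono fun ω => hdecoupled _ _
    _ = 1 := by simp
  calc _ ≤ ‖∫ x, exp (lam * ΔL x - c - idens x) ∂muJ‖ := le_norm_self _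
    _ ≤ (∫⁻ x, ENNReal.ofReal ‖exp (lam * ΔL x - c - idens x)‖ ∂muJ).toReal :=
        norm_integral_le_lintegral_norm _
    _ ≤ 1 := by
        simp only [norm_eq_abs, abs_exp]
        exact ENNReal.toReal_le_of_le_ofReal zero_le_one
          (hlintegral.trans_eq ENNReal.ofReal_one.symm)

/-- Proposition 2 (environment-level exponential inequality).  `Zt ω i r j s` is the supersample
point of the `i`-th task pair (task selected by bit `r`), sample `j`, selection bit `s`.
`Lhat u d` is the average per-task training loss `L̂_d(u)` of hyperparameter `u` on dataset `d`
(bounded in `[a,b]` since the loss is).  `muJ` is the joint law of `(U, (R,S₁:ₙ), Z̃)` and `nuP`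
the decoupled law where `(R,S₁:ₙ)` is an independent uniform Bernoulli tuple; `idens` is the
conditional information density `ı(U;R,S₁:ₙ|Z̃)`.  For every `λ`,
`E[exp(λ·ΔL̃ − λ²(b−a)²/(2N) − ı)] ≤ 1`. -/
theorem stmt_12 {Ω 𝒰 𝒵 : Type*} [MeasurableSpace Ω] [MeasurableSpace 𝒰] [MeasurableSpace 𝒵]
    (P : Measure Ω) [IsProbabilityMeasure P]
    (N M : ℕ) (hN : 0 < N) (hM : 0 < M) (a b : ℝ) (hab : a ≤ b)
    (Lhat : 𝒰 → (Fin M → 𝒵) → ℝ) (hLhatmeas : Measurable (Function.uncurry Lhat))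
    (hLhatbdd : ∀ u d, a ≤ Lhat u d ∧ Lhat u d ≤ b)
    (U : Ω → 𝒰) (Zt : Ω → Fin N → Bool → Fin M → Bool → 𝒵)
    (R : Ω → Fin N → Bool) (S : Ω → Fin N → Fin M → Bool)
    (hU : Measurable U) (hZt : Measurable Zt) (hR : Measurable R) (hS : Measurable S)
    (muJ nuP : Measure (𝒰 × ((Fin N → Bool) × (Fin N → Fin M → Bool)) ×
      (Fin N → Bool → Fin M → Bool → 𝒵)))
    (hmuJ : muJ = P.map (fun ω => (U ω, (R ω, S ω), Zt ω)))
    (hnuP : nuP = (P.prod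
        ((PMF.uniformOfFintype ((Fin N → Bool) × (Fin N → Fin M → Bool))).toMeasure)).map
      (fun p => (U p.1, p.2, Zt p.1)))
    (hac : muJ ≪ nuP)
    (idens : 𝒰 × ((Fin N → Bool) × (Fin N → Fin M → Bool)) ×
      (Fin N → Bool → Fin M → Bool → 𝒵) → ℝ)
    (hidens : Measurable idens)
    (hd : muJ.rnDeriv nuP =ᵐ[nuP] fun x => ENNReal.ofReal (Real.exp (idens x)))
    (ΔL : 𝒰 × ((Fin N → Bool) × (Fin N → Fin M → Bool)) ×
      (Fin N → Bool → Fin M → Bool → 𝒵) → ℝ)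
    (hΔL : ∀ u r s zt, ΔL (u, (r, s), zt) =
      (N : ℝ)⁻¹ * ∑ i, Lhat u (fun j => zt i (!(r i)) j (!(s i j))) -
        (N : ℝ)⁻¹ * ∑ i, Lhat u (fun j => zt i (r i) j (s i j))) :
    ∀ lam : ℝ,
      ∫ x, Real.exp (lam * ΔL x - lam ^ 2 * (b - a) ^ 2 / (2 * N) - idens x) ∂muJ ≤ 1 :=
  stmt_12_general P N M a b Lhat hLhatbdd U Zt R S muJ nuP hmuJ hnuP hac idens hd ΔL hΔL
end
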